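/- Let (φ_i)_{i≥1} be a sequence of upper-triangular matrices in SL(2,ℝ), φ_i = [[a_i, b_i],[0, a_i^{−1}]] with a_i ≠ 0. Then the set of periods {τ ∈ (0, ∞) : the sequence (f^{(k)}(τ))_{k≥1} is bounded} contains at most one point. -/

import Mathlib

/-!
Every `f^{(k)}(τ)` is upper triangular, with diagonal `A_k, A_k⁻¹` independent of `τ`, where
`A_k = a_1 ⋯ a_k`, and upper-right entry `A_k (τ S_k + T_k)` with `S_k = ∑_{j<k} A_j⁻²`.
Boundedness at one period bounds `|A_k|` and `|A_k|⁻¹` by some `C`, so `S_k ≥ k / C²`, and the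
upper-right entries at two periods `τ₁, τ₂` then differ by `|τ₂ - τ₁| |A_k| S_k ≥ |τ₂ - τ₁| k / C³`,
which stays bounded only if `τ₁ = τ₂`.
-/

/-- The matrix `h^t = [[1, t],[0, 1]] ∈ SL(2,ℝ)`. -/
def hMat (t : ℝ) : Matrix (Fin 2) (Fin 2) ℝ := !![1, t; 0, 1]

/-- The kicked evolution `f^{(k)}(τ) = φ_k h^τ φ_{k-1} h^τ ⋯ φ_1 h^τ`. -/
def kickedEvol (φ : ℕ → Matrix (Fin 2) (Fin 2) ℝ) (τ : ℝ) :
    ℕ → Matrix (Fin 2) (Fin 2) ℝ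
  | 0 => 1
  | k + 1 => φ (k + 1) * hMat τ * kickedEvol φ τ k

/-- A sequence of matrices is bounded if all its entries are uniformly bounded
(equivalently, it lies in a compact subset). -/
def MatSeqBounded (f : ℕ → Matrix (Fin 2) (Fin 2) ℝ) : Prop :=
  ∃ C : ℝ, ∀ k : ℕ, 1 ≤ k → ∀ i j : Fin 2, |f k i j| ≤ C

open Finset

def diagProd (a : ℕ → ℝ) (k : ℕ) : ℝ := ∏ i ∈ range k, a (i + 1)

noncomputable def invSqSum (a : ℕ → ℝ) (k : ℕ) : ℝ := ∑ j ∈ range k, (diagProd a j ^ 2)⁻¹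

noncomputable def kickOffset (a b : ℕ → ℝ) (k : ℕ) : ℝ :=
  ∑ j ∈ range k, b (j + 1) / (a (j + 1) * diagProd a j ^ 2)

lemma diagProd_ne_zero {a : ℕ → ℝ} (ha : ∀ i, 1 ≤ i → a i ≠ 0) (k : ℕ) : diagProd a k ≠ 0 :=
  prod_ne_zero_iff.2 fun i _ ↦ ha (i + 1) i.succ_pos

lemma kickedEvol_eq {a b : ℕ → ℝ} (ha : ∀ i, 1 ≤ i → a i ≠ 0) {φ : ℕ → Matrix (Fin 2) (Fin 2) ℝ}
    (hφ : ∀ i, 1 ≤ i → φ i = !![a i, b i; 0, (a i)⁻¹]) (τ : ℝ) (k : ℕ) :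
    kickedEvol φ τ k = !![diagProd a k, diagProd a k * (τ * invSqSum a k + kickOffset a b k);
      0, (diagProd a k)⁻¹] := by
  induction k with
  | zero => simp [kickedEvol, diagProd, invSqSum, kickOffset, Matrix.one_fin_two]
  | succ k ih =>
    have hak := ha (k + 1) k.succ_pos
    have hPk := diagProd_ne_zero ha k
    have hP : diagProd a (k + 1) = diagProd a k * a (k + 1) := prod_range_succ _ _
    have hS : invSqSum a (k + 1) = invSqSum a k + (diagProd a k ^ 2)⁻¹ := sum_range_succ _ _
    have hT : kickOffset a b (k + 1) =
        kickOffset a b k + b (k + 1) / (a (k + 1) * diagProd a k ^ 2) := sum_range_succ _ _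
    rw [kickedEvol, hφ (k + 1) k.succ_pos, ih, hMat, hP, hS, hT]
    simp only [Matrix.mul_fin_two, EmbeddingLike.apply_eq_iff_eq, Matrix.vecCons_inj, and_true]
    refine ⟨⟨by ring, ?_⟩, by ring, by rw [mul_inv]; ring⟩
    field_simp
    ring

lemma natCast_div_sq_le_invSqSum {a : ℕ → ℝ} (ha : ∀ i, 1 ≤ i → a i ≠ 0) {C : ℝ}
    (hC : ∀ j, |diagProd a j| ≤ C) (k : ℕ) : k / C ^ 2 ≤ invSqSum a k := by
  have hterm (j : ℕ) : (C ^ 2)⁻¹ ≤ (diagProd a j ^ 2)⁻¹ := by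
    rw [← sq_abs (diagProd a j)]
    exact inv_anti₀ (by positivity [diagProd_ne_zero ha j])
      (pow_le_pow_left₀ (abs_nonneg _) (hC j) 2)
  simpa [div_eq_mul_inv, invSqSum] using card_nsmul_le_sum (range k) _ _ fun j _ ↦ hterm j

lemma MatSeqBounded.exists_common_bound {f g : ℕ → Matrix (Fin 2) (Fin 2) ℝ}
    (hf : MatSeqBounded f) (hg : MatSeqBounded g) :
    ∃ C, 1 ≤ C ∧ ∀ k, 1 ≤ k → ∀ i j, |f k i j| ≤ C ∧ |g k i j| ≤ C := by
  obtain ⟨C₁, hC₁⟩ := hf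
  obtain ⟨C₂, hC₂⟩ := hg
  refine ⟨max (max C₁ C₂) 1, le_max_right _ _, fun k hk i j ↦ ⟨?_, ?_⟩⟩
  · exact (hC₁ k hk i j).trans ((le_max_left _ _).trans (le_max_left _ _))
  · exact (hC₂ k hk i j).trans ((le_max_right _ _).trans (le_max_left _ _))

lemma eq_zero_of_forall_mul_natCast_le {c D : ℝ} (hc : 0 ≤ c) (h : ∀ k : ℕ, 1 ≤ k → c * k ≤ D) :
    c = 0 := by
  by_contra hne
  obtain ⟨n, hn⟩ := exists_nat_gt (D / c)
  have := h (n + 1) n.succ_pos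
  rw [div_lt_iff₀ (hc.lt_of_ne' hne)] at hn
  push_cast at this
  nlinarith

lemma eq_of_matSeqBounded_kickedEvol {a b : ℕ → ℝ} (ha : ∀ i, 1 ≤ i → a i ≠ 0)
    {φ : ℕ → Matrix (Fin 2) (Fin 2) ℝ} (hφ : ∀ i, 1 ≤ i → φ i = !![a i, b i; 0, (a i)⁻¹])
    {τ₁ τ₂ : ℝ} (h₁ : MatSeqBounded (kickedEvol φ τ₁)) (h₂ : MatSeqBounded (kickedEvol φ τ₂)) :
    τ₁ = τ₂ := by
  obtain ⟨C, hC1, hC⟩ := h₁.exists_common_bound h₂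
  simp only [kickedEvol_eq ha hφ] at hC
  set P := diagProd a
  set S := invSqSum a
  have hP (k : ℕ) : |P k| ≤ C := by
    rcases k.eq_zero_or_pos with rfl | hk
    · simpa [P, diagProd] using hC1
    · exact (hC k hk 0 0).1
  have hPinv {k : ℕ} (hk : 1 ≤ k) : C⁻¹ ≤ |P k| := by
    have h : |(P k)⁻¹| ≤ C := (hC k hk 1 1).1
    rw [abs_inv] at h
    exact (inv_le_comm₀ (abs_pos.2 (diagProd_ne_zero ha k)) (by positivity)).1 h
  have hdiff {k : ℕ} (hk : 1 ≤ k) : |τ₂ - τ₁| * |P k| * S k ≤ 2 * C := by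
    have e₁ : |P k * (τ₁ * S k + kickOffset a b k)| ≤ C := (hC k hk 0 1).1
    have e₂ : |P k * (τ₂ * S k + kickOffset a b k)| ≤ C := (hC k hk 0 1).2
    have hS : 0 ≤ S k := sum_nonneg fun j _ ↦ by positivity
    have h := abs_sub (P k * (τ₂ * S k + kickOffset a b k)) (P k * (τ₁ * S k + kickOffset a b k))
    rw [show P k * (τ₂ * S k + kickOffset a b k) - P k * (τ₁ * S k + kickOffset a b k)
      = (τ₂ - τ₁) * P k * S k by ring, abs_mul, abs_mul, abs_of_nonneg hS] at h
    linarith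
  have hgrowth {k : ℕ} (hk : 1 ≤ k) : |τ₂ - τ₁| * k ≤ 2 * C * C ^ 3 := by
    have h : |τ₂ - τ₁| * C⁻¹ * (k / C ^ 2) ≤ 2 * C := calc
      _ ≤ |τ₂ - τ₁| * |P k| * S k := by
        gcongr
        exacts [hPinv hk, natCast_div_sq_le_invSqSum ha hP k]
      _ ≤ 2 * C := hdiff hk
    rwa [show |τ₂ - τ₁| * C⁻¹ * (k / C ^ 2) = |τ₂ - τ₁| * k / C ^ 3 by field_simp,
      div_le_iff₀ (by positivity)] at h
  have := eq_zero_of_forall_mul_natCast_le (abs_nonneg _) fun _ ↦ hgrowth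
  exact (sub_eq_zero.1 (abs_eq_zero.1 this)).symm

/-- for upper-triangular kicks `φ_i = [[a_i, b_i],[0, a_i⁻¹]]` the set of
periods `τ > 0` for which the kicked evolution is bounded contains at most one point. -/
theorem stmt_9 (a b : ℕ → ℝ) (ha : ∀ i : ℕ, 1 ≤ i → a i ≠ 0)
    (φ : ℕ → Matrix (Fin 2) (Fin 2) ℝ)
    (hφ : ∀ i : ℕ, 1 ≤ i → φ i = !![a i, b i; 0, (a i)⁻¹]) :
    {τ : ℝ | τ ∈ Set.Ioi (0 : ℝ) ∧ MatSeqBounded (kickedEvol φ τ)}.Subsingleton :=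
  fun _ h₁ _ h₂ ↦ eq_of_matSeqBounded_kickedEvol ha hφ h₁.2 h₂.2
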